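/- Let K be a field and let (|·|_v)_{v ∈ M} be a family of absolute values on K such that for each α ∈ K \ {0}, |α|_v = 1 for all but finitely many v ∈ M and ∏_{v ∈ M} |α|_v = 1 (a product formula field). Fix integers N ≥ 1 and d ≥ 2 and let F = (F_0, …, F_N), where each F_i ∈ K[x_0, …, x_N] is homogeneous of degree d. Let I ⊆ K[x_0, …, x_N] be a set of homogeneous polynomials. For each v ∈ M let Ω_v be a field extension of K equipped with an absolute value extending |·|_v, let 𝒦_v = {P ∈ Ω_v^{N+1} : ‖F^k(P)‖_v does not tend to ∞ as k → ∞} be the homogeneous filled Julia set of F over Ω_v, and let Z_v(I) ⊆ Ω_v^{N+1} be the common zero locus of I; assume F(Z_v(I)) ⊆ Z_v(I) for each v. Suppose there are a finite subset S₀ ⊆ M and reals R_v ≥ 1 (v ∈ S₀) such that: (i) for v ∈ S₀, ‖P‖_v ≤ R_v for all P ∈ 𝒦_v ∩ Z_v(I); and (ii) for v ∉ S₀, the absolute value on Ω_v is nonarchimedean and ‖P‖_v ≤ 1 for all P ∈ 𝒦_v ∩ Z_v(I). Then there is a constant C (depending only on d, N, S₀ and the R_v) with the following property: for every integer n ≥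 2, every integer c ≥ 1, every K-linearly independent family η_1, …, η_c of degree-n polynomials of special form relative to F with at most log(n)/log((2N+2)/(2N+1)) factors each, and every choice, for each v ∈ M, of points P_{v,1}, …, P_{v,c} ∈ 𝒦_v ∩ Z_v(I), one has: |det(η_j(P_{v,i}))_{i,j}|_v ≤ 1 for every v ∉ S₀, and ∑_{v ∈ S₀} max{ (1/(n·c)) · log|det(η_j(P_{v,i}))_{i,j}|_v , 0 } ≤ C · (log n)/n. -/
import Mathlib


open MvPolynomial Filter

/-- The coordinate polynomials `F_i^{(k)}` of the `k`-th iterate of the polynomial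
self-map of `K^{N+1}` defined by `F = (F_0, …, F_N)`; `F^0` is the identity. -/
noncomputable def iterF {K : Type*} [Field K] {N : ℕ}
    (F : Fin (N + 1) → MvPolynomial (Fin (N + 1)) K) :
    ℕ → Fin (N + 1) → MvPolynomial (Fin (N + 1)) K
  | 0, i => X i
  | k + 1, i => aeval (iterF F k) (F i)

/-- The sup-norm `‖P‖ = max_i |P_i|` of a point `P ∈ L^{N+1}`. -/
noncomputable def supNorm {L : Type*} [Field L] (v : AbsoluteValue L ℝ) {N : ℕ}
    (P : Fin (N + 1) → L) : ℝ :=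
  Finset.univ.sup' Finset.univ_nonempty fun i => v (P i)

/-- The self-map of `L^{N+1}` obtained by evaluating `F` via a ring hom `φ : K →+* L`. -/
noncomputable def evalMap₂ {K L : Type*} [Field K] [Field L] (φ : K →+* L) {N : ℕ}
    (F : Fin (N + 1) → MvPolynomial (Fin (N + 1)) K)
    (P : Fin (N + 1) → L) : Fin (N + 1) → L :=
  fun i => eval₂ φ P (F i)

/-- The homogeneous filled Julia set of `F` over an extension field `L` of `K`:
points whose forward orbit sup-norms do not tend to infinity. -/
noncomputable def juliaSet₂ {K L : Type*} [Field K] [Field L] (v : AbsoluteValue L ℝ)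
    (φ : K →+* L) {N : ℕ}
    (F : Fin (N + 1) → MvPolynomial (Fin (N + 1)) K) : Set (Fin (N + 1) → L) :=
  {P | ¬ Tendsto (fun k => supNorm v ((evalMap₂ φ F)^[k] P)) atTop atTop}

/-- The common zero locus in `L^{N+1}` of a set `I` of polynomials over `K`. -/
def zeroLocus₂ {K L : Type*} [Field K] [Field L] (φ : K →+* L) {N : ℕ}
    (I : Set (MvPolynomial (Fin (N + 1)) K)) : Set (Fin (N + 1) → L) :=
  {P | ∀ g ∈ I, eval₂ φ P g = 0}

/-- A degree-`n` polynomial of special form relative to `F`, with at most `tmax` factors: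
`x^α · ∏_{l} (F_{i_l}^{(k_l)})^{j_l}` with `deg x^α < d(N+1)`, `k_l ≥ 1`, `1 ≤ j_l ≤ d−1`. -/
def IsSpecialForm {K : Type*} [Field K] {N : ℕ}
    (F : Fin (N + 1) → MvPolynomial (Fin (N + 1)) K) (d n : ℕ) (tmax : ℝ)
    (η : MvPolynomial (Fin (N + 1)) K) : Prop :=
  ∃ (α : Fin (N + 1) →₀ ℕ) (t : ℕ) (idx : Fin t → Fin (N + 1)) (k j : Fin t → ℕ),
    (∑ s, α s) < d * (N + 1) ∧ (t : ℝ) ≤ tmax ∧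
    (∀ l, 1 ≤ k l) ∧ (∀ l, 1 ≤ j l ∧ j l ≤ d - 1) ∧
    η = monomial α (1 : K) * ∏ l, iterF F (k l) (idx l) ^ j l ∧
    η.IsHomogeneous n

lemma eval₂_iterF {K L : Type*} [Field K] [Field L] (φ : K →+* L) {N : ℕ}
    (F : Fin (N + 1) → MvPolynomial (Fin (N + 1)) K) (P : Fin (N + 1) → L) :
    ∀ (k : ℕ) (i : Fin (N + 1)),
      eval₂ φ P (iterF F k i) = (evalMap₂ φ F)^[k] P i := by
  intro k
  induction k with
  | zero => intro i; simp [iterF]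
  | succ k ih =>
    intro i
    have h1 : (iterF F (k+1) i) = bind₁ (iterF F k) (F i) := rfl
    rw [h1, Function.iterate_succ_apply']
    have := eval₂Hom_bind₁ φ P (iterF F k) (F i)
    simpa [evalMap₂, funext fun j => ih j] using this

lemma julia_inv {K L : Type*} [Field K] [Field L] (v : AbsoluteValue L ℝ) (φ : K →+* L) {N : ℕ}
    (F : Fin (N + 1) → MvPolynomial (Fin (N + 1)) K) {P : Fin (N + 1) → L}
    (hP : P ∈ juliaSet₂ v φ F) : evalMap₂ φ F P ∈ juliaSet₂ v φ F := by
  intro h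
  apply hP
  have : (fun k => supNorm v ((evalMap₂ φ F)^[k] (evalMap₂ φ F P)))
      = fun k => supNorm v ((evalMap₂ φ F)^[k + 1] P) := by
    funext k; rw [Function.iterate_succ_apply]
  rw [this] at h
  exact (tendsto_add_atTop_iff_nat 1).mp h

lemma abs_sum_le_one {L ι : Type*} [Field L] (v : AbsoluteValue L ℝ)
    (hna : ∀ x y : L, v (x + y) ≤ max (v x) (v y)) (s : Finset ι) (f : ι → L)
    (hf : ∀ i ∈ s, v (f i) ≤ 1) : v (∑ i ∈ s, f i) ≤ 1 := by
  classical
  induction s using Finset.induction_on with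
  | empty => simp
  | @insert a s hx ih =>
    rw [Finset.sum_insert hx]
    refine le_trans (hna _ _) (max_le (hf a (Finset.mem_insert_self a s)) ?_)
    exact ih fun i hi => hf i (Finset.mem_insert_of_mem hi)

lemma abs_det_perm_term {L : Type*} [Field L] (v : AbsoluteValue L ℝ) {c : ℕ}
    (σ : Equiv.Perm (Fin c)) (x : L) :
    v ((Equiv.Perm.sign σ : ℤˣ) • x) = v x := by
  rcases Int.units_eq_one_or (Equiv.Perm.sign σ) with h | h <;> rw [h] <;> simp

lemma eval_special_bound {K L : Type*} [Field K] [Field L] (v : AbsoluteValue L ℝ)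
    (φ : K →+* L) {N : ℕ} (F : Fin (N + 1) → MvPolynomial (Fin (N + 1)) K)
    (d n : ℕ) (tmax : ℝ) (η : MvPolynomial (Fin (N + 1)) K)
    (hη : IsSpecialForm F d n tmax η) (P : Fin (N + 1) → L) {R : ℝ} (hR : 1 ≤ R)
    (hsup : ∀ k, supNorm v ((evalMap₂ φ F)^[k] P) ≤ R) :
    ∃ t : ℕ, (t : ℝ) ≤ tmax ∧ v (eval₂ φ P η) ≤ R ^ (d * (N + 1) + t * (d - 1)) := by
  obtain ⟨α, t, idx, k, j, hα, ht, hk, hj, heq, hhom⟩ := hη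
  have hR0 : (0 : ℝ) ≤ R := le_trans zero_le_one hR
  have hcoord : ∀ (k' : ℕ) (i : Fin (N + 1)), v ((evalMap₂ φ F)^[k'] P i) ≤ R := by
    intro k' i
    exact le_trans (Finset.le_sup' (fun i => v ((evalMap₂ φ F)^[k'] P i))
      (Finset.mem_univ i)) (hsup k')
  have hP : ∀ i, v (P i) ≤ R := by
    intro i; simpa using hcoord 0 i
  refine ⟨t, ht, ?_⟩
  rw [heq, eval₂_mul, v.map_mul]
  have e1 : v (eval₂ φ P (monomial α (1 : K))) ≤ R ^ (∑ s, α s) := by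
    rw [eval₂_monomial, map_one, one_mul, Finsupp.prod]
    calc v (∏ s ∈ α.support, P s ^ α s) = ∏ s ∈ α.support, v (P s) ^ α s := by
          rw [map_prod]; simp [map_pow]
      _ ≤ ∏ s ∈ α.support, R ^ α s :=
          Finset.prod_le_prod (fun s _ => pow_nonneg (v.nonneg _) _)
            (fun s _ => pow_le_pow_left₀ (v.nonneg _) (hP s) _)
      _ = R ^ (∑ s ∈ α.support, α s) := Finset.prod_pow_eq_pow_sum _ _ _
      _ ≤ R ^ (∑ s, α s) :=
          pow_le_pow_right₀ hR (Finset.sum_le_sum_of_subset (Finset.subset_univ _))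
  have e2 : v (eval₂ φ P (∏ l, iterF F (k l) (idx l) ^ j l)) ≤ R ^ (∑ l, j l) := by
    have h0 : v (eval₂ φ P (∏ l, iterF F (k l) (idx l) ^ j l))
        = ∏ l, v ((evalMap₂ φ F)^[k l] P (idx l)) ^ j l := by
      rw [← coe_eval₂Hom, map_prod, map_prod]
      refine Finset.prod_congr rfl fun l _ => ?_
      rw [map_pow, map_pow, coe_eval₂Hom, eval₂_iterF]
    rw [h0, ← Finset.prod_pow_eq_pow_sum]
    refine Finset.prod_le_prod (fun l _ => pow_nonneg (v.nonneg _) _) fun l _ => ?_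
    exact pow_le_pow_left₀ (v.nonneg _) (hcoord _ _) _
  calc v (eval₂ φ P (monomial α (1 : K))) * v (eval₂ φ P (∏ l, iterF F (k l) (idx l) ^ j l))
      ≤ R ^ (∑ s, α s) * R ^ (∑ l, j l) :=
        mul_le_mul e1 e2 (v.nonneg _) (pow_nonneg hR0 _)
    _ = R ^ ((∑ s, α s) + ∑ l, j l) := (pow_add R _ _).symm
    _ ≤ R ^ (d * (N + 1) + t * (d - 1)) := by
        refine pow_le_pow_right₀ hR (Nat.add_le_add hα.le ?_)
        calc (∑ l, j l) ≤ ∑ _l : Fin t, (d - 1) := Finset.sum_le_sum fun l _ => (hj l).2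
          _ = t * (d - 1) := by simp [Finset.sum_const, mul_comm]

lemma card_le_of_linIndep_homog {K : Type*} [Field K] {N n c : ℕ}
    (η : Fin c → MvPolynomial (Fin (N + 1)) K) (hlin : LinearIndependent K η)
    (hhom : ∀ m, (η m).IsHomogeneous n) : c ≤ (n + 1) ^ (N + 1) := by
  classical
  set D : Finset ((Fin (N + 1)) →₀ ℕ) :=
    Finset.image (fun f : Fin (N + 1) → Fin (n + 1) =>
      Finsupp.equivFunOnFinite.symm fun i => ((f i : ℕ))) Finset.univ with hD
  set W : Finset (MvPolynomial (Fin (N + 1)) K) :=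
    D.image (fun s => monomial s (1 : K)) with hW
  have hspan : Set.range η ⊆ Submodule.span K (W : Set (MvPolynomial (Fin (N + 1)) K)) := by
    rintro _ ⟨m, rfl⟩
    rw [(η m).as_sum]
    refine Submodule.sum_mem _ fun s hs => ?_
    have hsm : monomial s (coeff s (η m)) = (coeff s (η m)) • monomial s (1 : K) := by
      rw [MvPolynomial.smul_monomial, smul_eq_mul, mul_one]
    rw [hsm]
    refine Submodule.smul_mem _ _ (Submodule.subset_span ?_)
    refine Finset.mem_coe.2 (Finset.mem_image.2 ⟨s, ?_, rfl⟩)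
    have hdeg : ∑ i, s i = n := by
      have := hhom m (MvPolynomial.mem_support_iff.1 hs)
      simpa [Finsupp.weight_apply, Finsupp.sum_fintype] using this
    have hle : ∀ i, s i ≤ n := by
      intro i
      rw [← hdeg]
      exact Finset.single_le_sum (fun _ _ => Nat.zero_le _) (Finset.mem_univ i)
    refine Finset.mem_image.2 ⟨fun i => ⟨s i, Nat.lt_succ_of_le (hle i)⟩,
      Finset.mem_univ _, ?_⟩
    ext i
    simp [Finsupp.equivFunOnFinite]
  have h1 : Fintype.card (Fin c) ≤ Fintype.card (W : Set (MvPolynomial (Fin (N + 1)) K)) :=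
    linearIndependent_le_span_aux' η hlin _ hspan
  have h2 : Fintype.card (W : Set (MvPolynomial (Fin (N + 1)) K)) = W.card := by
    simp
  have h3 : W.card ≤ D.card := Finset.card_image_le
  have h4 : D.card ≤ (n + 1) ^ (N + 1) := by
    refine le_trans Finset.card_image_le ?_
    simp [Finset.card_univ]
  rw [h2] at h1
  simpa using le_trans h1 (le_trans h3 h4)

lemma det_bound_nonarch {L : Type*} [Field L] (v : AbsoluteValue L ℝ)
    (hna : ∀ x y : L, v (x + y) ≤ max (v x) (v y)) {c : ℕ}
    (A : Matrix (Fin c) (Fin c) L) (hA : ∀ i j, v (A i j) ≤ 1) : v A.det ≤ 1 := by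
  rw [Matrix.det_apply]
  refine abs_sum_le_one v hna _ _ fun σ _ => ?_
  rw [abs_det_perm_term]
  calc v (∏ i, A (σ i) i) = ∏ i, v (A (σ i) i) := map_prod v _ _
    _ ≤ 1 := Finset.prod_le_one (fun i _ => v.nonneg _) (fun i _ => hA _ _)

lemma det_bound_arch {L : Type*} [Field L] (v : AbsoluteValue L ℝ) {c : ℕ}
    (A : Matrix (Fin c) (Fin c) L) {B : ℝ} (hB : 0 ≤ B) (hA : ∀ i j, v (A i j) ≤ B) :
    v A.det ≤ (c.factorial : ℝ) * B ^ c := by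
  rw [Matrix.det_apply]
  calc v (∑ σ : Equiv.Perm (Fin c), Equiv.Perm.sign σ • ∏ i, A (σ i) i)
      ≤ ∑ σ : Equiv.Perm (Fin c), v (Equiv.Perm.sign σ • ∏ i, A (σ i) i) := v.sum_le _ _
    _ ≤ ∑ _σ : Equiv.Perm (Fin c), B ^ c := by
        refine Finset.sum_le_sum fun σ _ => ?_
        rw [abs_det_perm_term]
        calc v (∏ i, A (σ i) i) = ∏ i, v (A (σ i) i) := map_prod v _ _
          _ ≤ ∏ _i : Fin c, B := Finset.prod_le_prod (fun i _ => v.nonneg _) (fun i _ => hA _ _)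
          _ = B ^ c := by simp
    _ = (c.factorial : ℝ) * B ^ c := by
        rw [Finset.sum_const, Finset.card_univ, Fintype.card_perm, Fintype.card_fin,
          nsmul_eq_mul]

theorem stmt3 {K : Type*} [Field K] (N d : ℕ) (hN : 1 ≤ N) (hd : 2 ≤ d)
    {M : Type*} (absval : M → AbsoluteValue K ℝ)
    -- product formula field: each nonzero α has |α|_v = 1 for a.e. v, and ∏_v |α|_v = 1
    (hfin : ∀ α : K, α ≠ 0 → (Function.mulSupport fun w => absval w α).Finite)
    (hprod : ∀ α : K, α ≠ 0 → ∏ᶠ w, absval w α = 1)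
    (F : Fin (N + 1) → MvPolynomial (Fin (N + 1)) K)
    (hF : ∀ i, (F i).IsHomogeneous d)
    (I : Set (MvPolynomial (Fin (N + 1)) K))
    (hI : ∀ g ∈ I, ∃ m, g.IsHomogeneous m)
    -- for each place, a field extension Ω_w of K with an absolute value extending |·|_w
    (Ω : M → Type*) [∀ w, Field (Ω w)]
    (φ : ∀ w, K →+* Ω w)
    (absΩ : ∀ w, AbsoluteValue (Ω w) ℝ)
    (hext : ∀ w x, absΩ w (φ w x) = absval w x)
    -- the zero locus of I is F-invariant over each Ω_w
    (hinv : ∀ w, ∀ P ∈ zeroLocus₂ (φ w) I, evalMap₂ (φ w) F P ∈ zeroLocus₂ (φ w) I)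
    (S₀ : Finset M) (R : M → ℝ) (hR : ∀ w ∈ S₀, 1 ≤ R w)
    (hbound : ∀ w ∈ S₀, ∀ P ∈ juliaSet₂ (absΩ w) (φ w) F ∩ zeroLocus₂ (φ w) I,
      supNorm (absΩ w) P ≤ R w)
    (hgood : ∀ w ∉ S₀,
      (∀ x y : Ω w, absΩ w (x + y) ≤ max (absΩ w x) (absΩ w y)) ∧
      ∀ P ∈ juliaSet₂ (absΩ w) (φ w) F ∩ zeroLocus₂ (φ w) I, supNorm (absΩ w) P ≤ 1) :
    ∃ C : ℝ, ∀ n : ℕ, 2 ≤ n → ∀ c : ℕ, 1 ≤ c →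
      ∀ η : Fin c → MvPolynomial (Fin (N + 1)) K,
        LinearIndependent K η →
        (∀ m, IsSpecialForm F d n
          (Real.log n / Real.log ((2 * (N : ℝ) + 2) / (2 * (N : ℝ) + 1))) (η m)) →
        ∀ P : (w : M) → Fin c → Fin (N + 1) → Ω w,
          (∀ w i, P w i ∈ juliaSet₂ (absΩ w) (φ w) F ∩ zeroLocus₂ (φ w) I) →
          (∀ w ∉ S₀,
            absΩ w (Matrix.det (Matrix.of fun i m => eval₂ (φ w) (P w i) (η m))) ≤ 1) ∧
          ∑ w ∈ S₀,
              max ((1 / ((n : ℝ) * (c : ℝ))) *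
                Real.log (absΩ w
                  (Matrix.det (Matrix.of fun i m => eval₂ (φ w) (P w i) (η m))))) 0
            ≤ C * Real.log n / n := by
  classical
  have hd1 : (1 : ℝ) ≤ (d : ℝ) := by exact_mod_cast Nat.one_le_of_lt hd
  set L0 : ℝ := Real.log ((2 * (N : ℝ) + 2) / (2 * (N : ℝ) + 1)) with hL0def
  have hL0 : 0 < L0 := by
    apply Real.log_pos
    rw [lt_div_iff₀ (by positivity)]
    linarith
  have hlog2 : (0 : ℝ) < Real.log 2 := Real.log_pos one_lt_two
  set lR : M → ℝ := fun w => Real.log (max (R w) 1) with hlRdef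
  have hlR : ∀ w, 0 ≤ lR w := fun w => Real.log_nonneg (le_max_right _ _)
  set Cw : M → ℝ := fun w =>
    2 * ((N : ℝ) + 1) + (d : ℝ) * ((N : ℝ) + 1) * lR w / Real.log 2
      + ((d : ℝ) - 1) * lR w / L0 with hCwdef
  have hCw : ∀ w, 0 ≤ Cw w := by
    intro w
    have h1 := hlR w
    have hN' : (0:ℝ) ≤ (N:ℝ) := Nat.cast_nonneg N
    have hd' : (0:ℝ) ≤ (d:ℝ) - 1 := by linarith
    have : 0 ≤ (d : ℝ) * ((N : ℝ) + 1) * lR w / Real.log 2 := by positivity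
    have : 0 ≤ ((d : ℝ) - 1) * lR w / L0 := by positivity
    simp only [hCwdef]
    positivity
  refine ⟨∑ w ∈ S₀, Cw w, ?_⟩
  intro n hn c hc η hlin hsp P hPmem
  have hn' : (2 : ℝ) ≤ (n : ℝ) := by exact_mod_cast hn
  have hn0 : (0 : ℝ) < (n : ℝ) := by linarith
  have hc0 : (0 : ℝ) < (c : ℝ) := by exact_mod_cast hc
  have hln : 0 < Real.log n := Real.log_pos (by linarith)
  have hl2n : Real.log 2 ≤ Real.log n := Real.log_le_log (by norm_num) hn'
  have hhom : ∀ m, (η m).IsHomogeneous n := by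
    intro m; obtain ⟨_, _, _, _, _, _, _, _, _, _, h⟩ := hsp m; exact h
  have hcb : c ≤ (n + 1) ^ (N + 1) := card_le_of_linIndep_homog η hlin hhom
  have horb : ∀ w (i : Fin c) (k : ℕ),
      (evalMap₂ (φ w) F)^[k] (P w i) ∈ juliaSet₂ (absΩ w) (φ w) F ∩ zeroLocus₂ (φ w) I := by
    intro w i k
    induction k with
    | zero => simpa using hPmem w i
    | succ k ih =>
      rw [Function.iterate_succ_apply']
      exact ⟨julia_inv _ _ _ ih.1, hinv w _ ih.2⟩
  constructor
  · intro w hw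
    obtain ⟨hna, hb1⟩ := hgood w hw
    refine det_bound_nonarch (absΩ w) hna _ fun i m => ?_
    obtain ⟨t, _, hb⟩ := eval_special_bound (absΩ w) (φ w) F d n _ (η m) (hsp m) (P w i)
      le_rfl (fun k => hb1 _ (horb w i k))
    simpa using hb
  · have key : ∀ w ∈ S₀,
        max ((1 / ((n : ℝ) * (c : ℝ))) * Real.log (absΩ w
          (Matrix.det (Matrix.of fun i m => eval₂ (φ w) (P w i) (η m))))) 0
        ≤ Cw w * Real.log n / n := by
      intro w hw
      have hRw : 1 ≤ R w := hR w hw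
      have hR0 : (0:ℝ) < R w := by linarith
      have hmax : max (R w) 1 = R w := max_eq_left hRw
      set v := absΩ w with hvdef
      set A : Matrix (Fin c) (Fin c) (Ω w) :=
        Matrix.of fun i m => eval₂ (φ w) (P w i) (η m) with hAdef
      set T : ℕ := Nat.floor (Real.log n / L0) with hTdef
      set E : ℕ := d * (N + 1) + T * (d - 1) with hEdef
      set lr : ℝ := Real.log (R w) with hlrdef
      have hlr0 : 0 ≤ lr := Real.log_nonneg hRw
      have hCweq : Cw w = 2 * ((N : ℝ) + 1) + (d : ℝ) * ((N : ℝ) + 1) * lr / Real.log 2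
          + ((d : ℝ) - 1) * lr / L0 := by
        simp only [hCwdef, hlRdef, hmax, hlrdef]
      have hent : ∀ i m, v (A i m) ≤ R w ^ E := by
        intro i m
        obtain ⟨t, ht, hb⟩ := eval_special_bound v (φ w) F d n _ (η m) (hsp m) (P w i)
          hRw (fun k => hbound w hw _ (horb w i k))
        refine le_trans hb (pow_le_pow_right₀ hRw ?_)
        exact Nat.add_le_add_left (Nat.mul_le_mul_right _ (Nat.le_floor ht)) _
      have hdet : v A.det ≤ (c.factorial : ℝ) * (R w ^ E) ^ c :=
        det_bound_arch v A (pow_nonneg (le_of_lt hR0) E) hent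
      have hrhs : 0 ≤ Cw w * Real.log n / n :=
        div_nonneg (mul_nonneg (hCw w) hln.le) hn0.le
      refine max_le ?_ hrhs
      by_cases hx : v A.det = 0
      · rw [hx, Real.log_zero, mul_zero]; exact hrhs
      · have hx0 : 0 < v A.det := lt_of_le_of_ne (v.nonneg _) (Ne.symm hx)
        have hcf : (0:ℝ) < (c.factorial : ℝ) := by exact_mod_cast c.factorial_pos
        have hRpow : (0:ℝ) < R w ^ E := pow_pos hR0 E
        have hlog1 : Real.log (v A.det)
            ≤ Real.log (c.factorial : ℝ) + (c : ℝ) * ((E : ℝ) * lr) := by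
          calc Real.log (v A.det) ≤ Real.log ((c.factorial : ℝ) * (R w ^ E) ^ c) :=
                Real.log_le_log hx0 hdet
            _ = Real.log (c.factorial : ℝ) + Real.log ((R w ^ E) ^ c) :=
                Real.log_mul (ne_of_gt hcf) (by positivity)
            _ = Real.log (c.factorial : ℝ) + (c : ℝ) * ((E : ℝ) * lr) := by
                rw [Real.log_pow, Real.log_pow]
        have hlc : Real.log (c.factorial : ℝ) ≤ (c : ℝ) * (2 * ((N:ℝ)+1) * Real.log n) := by
          have h1 : (c.factorial : ℝ) ≤ (c:ℝ) ^ c := by exact_mod_cast Nat.factorial_le_pow c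
          have h2 : Real.log (c.factorial : ℝ) ≤ (c:ℝ) * Real.log (c:ℝ) := by
            calc Real.log (c.factorial : ℝ) ≤ Real.log ((c:ℝ)^c) := Real.log_le_log hcf h1
              _ = (c:ℝ) * Real.log (c:ℝ) := by rw [Real.log_pow]
          have h3 : Real.log (c:ℝ) ≤ ((N:ℝ)+1) * Real.log ((n:ℝ)+1) := by
            calc Real.log (c:ℝ) ≤ Real.log (((n:ℝ)+1)^(N+1)) := by
                  refine Real.log_le_log hc0 ?_
                  exact_mod_cast hcb
              _ = ((N:ℝ)+1) * Real.log ((n:ℝ)+1) := by rw [Real.log_pow]; push_cast; ring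
          have h4 : Real.log ((n:ℝ)+1) ≤ 2 * Real.log n := by
            calc Real.log ((n:ℝ)+1) ≤ Real.log ((n:ℝ)^2) := by
                  refine Real.log_le_log (by linarith) (by nlinarith)
              _ = 2 * Real.log n := by rw [Real.log_pow]; norm_num
          have hN0 : (0:ℝ) ≤ (N:ℝ) + 1 := by positivity
          have h5 : Real.log (c:ℝ) ≤ 2 * ((N:ℝ)+1) * Real.log n := by
            calc Real.log (c:ℝ) ≤ ((N:ℝ)+1) * (2 * Real.log n) :=
                  le_trans h3 (mul_le_mul_of_nonneg_left h4 hN0)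
              _ = 2 * ((N:ℝ)+1) * Real.log n := by ring
          exact le_trans h2 (mul_le_mul_of_nonneg_left h5 hc0.le)
        have hElr : (E : ℝ) * lr ≤
            ((d : ℝ) * ((N : ℝ) + 1) * lr / Real.log 2 + ((d : ℝ) - 1) * lr / L0)
              * Real.log n := by
          have hEcast : (E : ℝ) = (d : ℝ) * ((N : ℝ) + 1) + (T : ℝ) * ((d : ℝ) - 1) := by
            rw [hEdef]
            push_cast [Nat.cast_sub (Nat.one_le_of_lt hd)]
            ring
          have hT1 : (T : ℝ) ≤ Real.log n / L0 :=
            Nat.floor_le (div_nonneg hln.le hL0.le)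
          have ht1 : (d : ℝ) * ((N : ℝ) + 1) * lr
              ≤ (d : ℝ) * ((N : ℝ) + 1) * lr / Real.log 2 * Real.log n := by
            rw [div_mul_eq_mul_div, le_div_iff₀ hlog2]
            have hdn : (0:ℝ) ≤ (d : ℝ) * ((N : ℝ) + 1) * lr := by positivity
            exact mul_le_mul_of_nonneg_left hl2n hdn
          have ht2 : (T : ℝ) * ((d : ℝ) - 1) * lr
              ≤ ((d : ℝ) - 1) * lr / L0 * Real.log n := by
            have hdl : (0:ℝ) ≤ ((d : ℝ) - 1) * lr := by
              have : (0:ℝ) ≤ (d:ℝ) - 1 := by linarith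
              positivity
            calc (T : ℝ) * ((d : ℝ) - 1) * lr ≤ (Real.log n / L0) * (((d : ℝ) - 1) * lr) := by
                  rw [mul_assoc]
                  exact mul_le_mul_of_nonneg_right hT1 hdl
              _ = ((d : ℝ) - 1) * lr / L0 * Real.log n := by ring
          calc (E : ℝ) * lr = (d : ℝ) * ((N : ℝ) + 1) * lr + (T : ℝ) * ((d : ℝ) - 1) * lr := by
                rw [hEcast]; ring
            _ ≤ (d : ℝ) * ((N : ℝ) + 1) * lr / Real.log 2 * Real.log n
                + ((d : ℝ) - 1) * lr / L0 * Real.log n := add_le_add ht1 ht2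
            _ = ((d : ℝ) * ((N : ℝ) + 1) * lr / Real.log 2 + ((d : ℝ) - 1) * lr / L0)
                * Real.log n := by ring
        have hs : Real.log (v A.det) ≤ (c : ℝ) * (Cw w * Real.log n) := by
          calc Real.log (v A.det) ≤ Real.log (c.factorial : ℝ) + (c : ℝ) * ((E : ℝ) * lr) :=
                hlog1
            _ ≤ (c : ℝ) * (2 * ((N:ℝ)+1) * Real.log n)
                + (c : ℝ) * (((d : ℝ) * ((N : ℝ) + 1) * lr / Real.log 2
                    + ((d : ℝ) - 1) * lr / L0) * Real.log n) :=
                add_le_add hlc (mul_le_mul_of_nonneg_left hElr hc0.le)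
            _ = (c : ℝ) * (Cw w * Real.log n) := by rw [hCweq]; ring
        calc (1 / ((n : ℝ) * (c : ℝ))) * Real.log (v A.det)
            ≤ (1 / ((n : ℝ) * (c : ℝ))) * ((c : ℝ) * (Cw w * Real.log n)) :=
              mul_le_mul_of_nonneg_left hs (by positivity)
          _ = Cw w * Real.log n / n := by field_simp
    calc ∑ w ∈ S₀,
          max ((1 / ((n : ℝ) * (c : ℝ))) * Real.log (absΩ w
            (Matrix.det (Matrix.of fun i m => eval₂ (φ w) (P w i) (η m))))) 0
        ≤ ∑ w ∈ S₀, Cw w * Real.log n / n := Finset.sum_le_sum key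
      _ = (∑ w ∈ S₀, Cw w) * Real.log n / n := by rw [Finset.sum_mul, Finset.sum_div]
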